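/- arXiv:2208.08827 — 3 statements merged into one kernel-verified Lean document; each statement's English description precedes it below -/
import Mathlib

section
/- The function g(θ) = θ sin(θ)/(1 - cos(θ)) is decreasing on the interval (0, π/2], and its limit as θ → 0+ is 2. -/
open Real Filter Set Topology

/-! Writing `1 - cos θ = sin² θ / (1 + cos θ)` turns the function into `(1 + cos θ) / sinc θ`,
which is continuous at `0` with value `2`. Its derivative simplifies to
`(sin θ - θ) / (1 - cos θ)`, negative on `(0, 2π)` because `sin θ < θ`. -/

lemma one_sub_cos_pos_of_mem_Ioo {x : ℝ} (hx : x ∈ Ioo 0 (2 * π)) : 0 < 1 - cos x := by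
  have hne : cos x ≠ 1 := fun h =>
    hx.1.ne' ((cos_eq_one_iff_of_lt_of_lt (by linarith [hx.1, pi_pos]) hx.2).1 h)
  linarith [(cos_le_one x).lt_of_ne hne]

lemma mul_sin_div_one_sub_cos_eq_div_sinc {θ : ℝ} (h : sin θ ≠ 0) :
    θ * sin θ / (1 - cos θ) = (1 + cos θ) / sinc θ := by
  have hθ : θ ≠ 0 := by rintro rfl; simp at h
  have hcos : 1 - cos θ ≠ 0 := by
    intro hc
    have : sin θ ^ 2 = 0 := by nlinarith [sin_sq_add_cos_sq θ]
    exact h (pow_eq_zero_iff two_ne_zero |>.1 this)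
  rw [sinc_of_ne_zero hθ]
  field_simp
  linear_combination sin_sq_add_cos_sq θ

lemma tendsto_mul_sin_div_one_sub_cos :
    Tendsto (fun θ : ℝ => θ * sin θ / (1 - cos θ)) (𝓝[≠] 0) (𝓝 2) := by
  have hsinc : Tendsto sinc (𝓝 0) (𝓝 1) := by
    simpa using continuous_sinc.tendsto 0
  have hlim : Tendsto (fun θ : ℝ => (1 + cos θ) / sinc θ) (𝓝 0) (𝓝 ((1 + cos 0) / 1)) :=
    ((continuous_cos.tendsto 0).const_add 1).div hsinc one_ne_zero
  norm_num at hlim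
  have hsin : ∀ᶠ θ in 𝓝[≠] (0 : ℝ), sin θ ≠ 0 := by
    filter_upwards [self_mem_nhdsWithin,
      nhdsWithin_le_nhds (hsinc.eventually_ne one_ne_zero)] with θ hθ hs
    rw [sinc_of_ne_zero hθ] at hs
    exact fun h => hs (by simp [h])
  exact (hlim.mono_left nhdsWithin_le_nhds).congr' <|
    hsin.mono fun θ h => (mul_sin_div_one_sub_cos_eq_div_sinc h).symm

lemma hasDerivAt_mul_sin_div_one_sub_cos {x : ℝ} (hx : cos x ≠ 1) :
    HasDerivAt (fun θ : ℝ => θ * sin θ / (1 - cos θ)) ((sin x - x) / (1 - cos x)) x := by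
  have hc : 1 - cos x ≠ 0 := sub_ne_zero.2 hx.symm
  refine (((hasDerivAt_id' x).mul (hasDerivAt_sin x)).div
    ((hasDerivAt_const x 1).sub (hasDerivAt_cos x)) hc).congr_deriv ?_
  simp only [Pi.mul_apply, Pi.sub_apply]
  field_simp
  linear_combination -x * sin_sq_add_cos_sq x

lemma strictAntiOn_mul_sin_div_one_sub_cos :
    StrictAntiOn (fun θ : ℝ => θ * sin θ / (1 - cos θ)) (Ioo 0 (2 * π)) := by
  have hderiv : ∀ x ∈ Ioo 0 (2 * π), HasDerivAt (fun θ : ℝ => θ * sin θ / (1 - cos θ))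
      ((sin x - x) / (1 - cos x)) x := fun x hx =>
    hasDerivAt_mul_sin_div_one_sub_cos (sub_pos.1 (one_sub_cos_pos_of_mem_Ioo hx)).ne
  refine strictAntiOn_of_deriv_neg (convex_Ioo 0 (2 * π))
    (fun x hx => (hderiv x hx).continuousAt.continuousWithinAt) fun x hx => ?_
  rw [interior_Ioo] at hx
  rw [(hderiv x hx).deriv]
  exact div_neg_of_neg_of_pos (sub_neg.2 (sin_lt hx.1)) (one_sub_cos_pos_of_mem_Ioo hx)

/-- The function `g θ = θ sin θ / (1 - cos θ)` is (strictly) decreasing on `(0, π/2]`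
and tends to `2` as `θ → 0⁺`. -/
theorem stmt_0 :
    StrictAntiOn (fun θ : ℝ => θ * Real.sin θ / (1 - Real.cos θ)) (Set.Ioc 0 (Real.pi / 2)) ∧
    Filter.Tendsto (fun θ : ℝ => θ * Real.sin θ / (1 - Real.cos θ))
      (nhdsWithin 0 (Set.Ioi 0)) (nhds 2) :=
  ⟨strictAntiOn_mul_sin_div_one_sub_cos.mono
      (Ioc_subset_Ioo_right (by linarith [pi_pos])),
    tendsto_mul_sin_div_one_sub_cos.mono_left
      (nhdsWithin_mono 0 fun _ hx => ne_of_gt hx)⟩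
end

section
/- For fixed δ > 0 and fixed real constants a, b, the integrals ∫_1^{πk/2} cos((j/k - 1)u)·g(u/k)/u du are bounded uniformly over all pairs of positive integers j, k with j/k - 1 ≥ δ, where g(θ) = θ sin θ/(1 - cos θ). -/
/-!
For `u ∈ [1, πk/2]` the integrand is `f(u) cos(lu)` with `l = j/k - 1` and
`f(u) = g(u/k)/u = sin(u/k) / (k (1 - cos(u/k)))`, a positive decreasing function
(its derivative is `-1 / (k² (1 - cos(u/k)))`). Integrating by parts against `sin(lu)/l`,
the integral of `f cos(lu)` over `[a, b]` is at most `2 f(a) / |l|`, and `f(1) = g(1/k) ≤ π²/2`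
because `sin θ ≤ θ` and `1 - cos θ ≥ 2θ²/π²`. Hence the bound `π²/δ`.
-/

open Real intervalIntegral

/-- `g(θ) = θ sin θ / (1 - cos θ)`, extended continuously by `g(0) = 2`. -/
noncomputable def gFun (θ : ℝ) : ℝ :=
  if θ = 0 then 2 else θ * Real.sin θ / (1 - Real.cos θ)

open Set MeasureTheory

section CosineIntegral

variable {f f' : ℝ → ℝ} {a b l : ℝ}

theorem abs_integral_mul_cos_le (hab : a ≤ b) (hl : l ≠ 0)
    (hf : ∀ x ∈ Icc a b, HasDerivAt f (f' x) x) (hf' : IntervalIntegrable f' volume a b) :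
    |∫ x in a..b, f x * cos (l * x)| ≤ (|f a| + |f b| + ∫ x in a..b, |f' x|) / |l| := by
  set v : ℝ → ℝ := fun x => sin (l * x) / l
  have hv : ∀ x, HasDerivAt v (cos (l * x)) x := fun x => by
    refine ((((hasDerivAt_id x).const_mul l).sin).div_const l).congr_deriv ?_
    simp [hl]
  have hv_cont : Continuous v := by fun_prop
  have hv_le : ∀ x, |v x| ≤ 1 / |l| := fun x => by
    simp only [v, abs_div]; gcongr; exact abs_sin_le_one _
  have hmul_le : ∀ c x, |c * v x| ≤ |c| / |l| := fun c x => by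
    rw [abs_mul, div_eq_mul_one_div]; exact mul_le_mul_of_nonneg_left (hv_le x) (abs_nonneg _)
  rw [← uIcc_of_le hab] at hf
  rw [intervalIntegral.integral_mul_deriv_eq_deriv_mul hf (fun x _ => hv x) hf'
    ((by fun_prop : Continuous fun x => cos (l * x)).intervalIntegrable _ _)]
  have hrest : |∫ x in a..b, f' x * v x| ≤ (∫ x in a..b, |f' x|) / |l| := by
    rw [← intervalIntegral.integral_div]
    refine (abs_integral_le_integral_abs hab).trans (integral_mono_on hab ?_ ?_ fun x _ => ?_)
    · exact (hf'.mul_continuousOn hv_cont.continuousOn).abs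
    · exact hf'.abs.div_const _
    · exact hmul_le _ x
  calc _ ≤ |f b * v b| + |f a * v a| + |∫ x in a..b, f' x * v x| :=
        (abs_sub _ _).trans (add_le_add_left (abs_sub _ _) _)
    _ ≤ |f b| / |l| + |f a| / |l| + (∫ x in a..b, |f' x|) / |l| := by
      gcongr <;> apply hmul_le
    _ = _ := by ring

theorem abs_integral_mul_cos_le_of_deriv_nonpos (hab : a ≤ b) (hl : l ≠ 0)
    (hf : ∀ x ∈ Icc a b, HasDerivAt f (f' x) x) (hf' : IntervalIntegrable f' volume a b)
    (hf'_nonpos : ∀ x ∈ Icc a b, f' x ≤ 0) (hfb : 0 ≤ f b) :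
    |∫ x in a..b, f x * cos (l * x)| ≤ 2 * f a / |l| := by
  have hftc : ∫ x in a..b, f' x = f b - f a :=
    integral_eq_sub_of_hasDerivAt (by rwa [uIcc_of_le hab]) hf'
  have hvar : ∫ x in a..b, |f' x| = f a - f b := by
    rw [integral_congr (g := fun x => -f' x) fun x hx => abs_of_nonpos
      (hf'_nonpos x (by rwa [uIcc_of_le hab] at hx)), intervalIntegral.integral_neg, hftc, neg_sub]
  have hfa : 0 ≤ f a - f b :=
    hvar ▸ intervalIntegral.integral_nonneg hab fun x _ => abs_nonneg _
  convert abs_integral_mul_cos_le hab hl hf hf' using 2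
  rw [hvar, abs_of_nonneg hfb, abs_of_nonneg (by linarith)]
  ring

end CosineIntegral

theorem hasDerivAt_sin_div_one_sub_cos {x : ℝ} (hx : cos x ≠ 1) :
    HasDerivAt (fun θ => sin θ / (1 - cos θ)) (-1 / (1 - cos x)) x := by
  have hx' : 1 - cos x ≠ 0 := sub_ne_zero.2 (Ne.symm hx)
  refine ((hasDerivAt_sin x).div ((hasDerivAt_cos x).const_sub 1) hx').congr_deriv ?_
  field_simp
  linear_combination -sin_sq_add_cos_sq x

theorem gFun_div_eq {u c : ℝ} (hu : u ≠ 0) (hc : c ≠ 0) :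
    gFun (u / c) / u = sin (u / c) / (1 - cos (u / c)) / c := by
  rw [gFun, if_neg (div_ne_zero hu hc)]
  field_simp

theorem gFun_le {θ : ℝ} (h0 : 0 < θ) (hπ : θ ≤ π) : gFun θ ≤ π ^ 2 / 2 := by
  have hcos := cos_le_one_sub_mul_cos_sq (abs_le.2 ⟨by linarith, hπ⟩)
  have hden : 0 < 1 - cos θ := by
    have : 0 < 2 / π ^ 2 * θ ^ 2 := by positivity
    linarith
  rw [gFun, if_neg h0.ne', div_le_iff₀ hden]
  calc θ * sin θ ≤ θ * θ := mul_le_mul_of_nonneg_left (sin_le h0.le) h0.le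
    _ = π ^ 2 / 2 * (2 / π ^ 2 * θ ^ 2) := by field_simp
    _ ≤ π ^ 2 / 2 * (1 - cos θ) := by gcongr; linarith

theorem abs_integral_cos_mul_gFun_div_le {c l : ℝ} (hc : 2 / π ≤ c) (hl : l ≠ 0) :
    |∫ u in (1 : ℝ)..(π * c / 2), cos (l * u) * gFun (u / c) / u| ≤ π ^ 2 / |l| := by
  have hc0 : 0 < c := lt_of_lt_of_le (by positivity) hc
  have hb : 1 ≤ π * c / 2 := by
    rw [div_le_iff₀ pi_pos] at hc; linarith
  have hθ : ∀ u ∈ Icc 1 (π * c / 2), 0 < u / c ∧ u / c ≤ π / 2 := fun u hu =>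
    ⟨by have := hu.1; positivity, by rw [div_le_iff₀ hc0]; linarith [hu.2]⟩
  have hcos : ∀ u ∈ Icc 1 (π * c / 2), cos (u / c) ≠ 1 := fun u hu h => by
    obtain ⟨h0, h1⟩ := hθ u hu
    rw [cos_eq_one_iff_of_lt_of_lt (by linarith [pi_pos]) (by linarith [pi_pos])] at h
    exact h0.ne' h
  set f : ℝ → ℝ := fun u => sin (u / c) / (1 - cos (u / c)) / c
  set f' : ℝ → ℝ := fun u => -1 / (1 - cos (u / c)) * (1 / c) / c
  have hf : ∀ u ∈ Icc 1 (π * c / 2), HasDerivAt f (f' u) u := fun u hu => by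
    have := hasDerivAt_sin_div_one_sub_cos (hcos u hu)
    exact (this.comp u ((hasDerivAt_id' u).div_const c)).div_const c
  have hf'_cont : ContinuousOn f' (Icc 1 (π * c / 2)) := by
    refine ((continuousOn_const.div (by fun_prop) fun u hu => ?_).mul
      continuousOn_const).div_const c
    exact sub_ne_zero.2 (hcos u hu).symm
  have hf'_nonpos : ∀ u ∈ Icc 1 (π * c / 2), f' u ≤ 0 := fun u _ =>
    div_nonpos_of_nonpos_of_nonneg (mul_nonpos_of_nonpos_of_nonneg
      (div_nonpos_of_nonpos_of_nonneg (by norm_num) (sub_nonneg.2 (cos_le_one _)))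
      (by positivity)) hc0.le
  have hfb : 0 ≤ f (π * c / 2) := by
    simp only [f]
    rw [show π * c / 2 / c = π / 2 by field_simp, sin_pi_div_two, cos_pi_div_two]
    positivity
  have hfa : f 1 ≤ π ^ 2 / 2 := by
    obtain ⟨h0, h1⟩ := hθ 1 ⟨le_rfl, hb⟩
    have := gFun_le h0 (by linarith [pi_pos])
    rwa [← div_one (gFun _), gFun_div_eq one_ne_zero hc0.ne'] at this
  rw [integral_congr (g := fun u => f u * cos (l * u)) fun u hu => by
    rw [uIcc_of_le hb] at hu
    rw [mul_div_assoc, gFun_div_eq (by linarith [hu.1]) hc0.ne', mul_comm]]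
  calc _ ≤ 2 * f 1 / |l| := abs_integral_mul_cos_le_of_deriv_nonpos hb hl hf
        ((uIcc_of_le hb ▸ hf'_cont).intervalIntegrable) hf'_nonpos hfb
    _ ≤ 2 * (π ^ 2 / 2) / |l| := by gcongr
    _ = π ^ 2 / |l| := by ring

/-- For fixed `δ > 0`, the integrals `∫_1^{πk/2} cos((j/k - 1)u) g(u/k)/u du` are bounded
uniformly over pairs of positive integers `j, k` with `j/k - 1 ≥ δ`. -/
theorem stmt_6 (δ : ℝ) (hδ : 0 < δ) :
    ∃ C : ℝ, ∀ j k : ℕ, 0 < k → (1 + δ) * (k : ℝ) ≤ (j : ℝ) →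
      |∫ u in (1 : ℝ)..(Real.pi * k / 2),
        Real.cos (((j : ℝ) / (k : ℝ) - 1) * u) * gFun (u / k) / u| ≤ C := by
  refine ⟨π ^ 2 / δ, fun j k hk hjk => ?_⟩
  have hk0 : (0 : ℝ) < k := Nat.cast_pos.2 hk
  have hl : δ ≤ (j : ℝ) / k - 1 := by
    rw [le_sub_iff_add_le', le_div_iff₀ hk0]; linarith
  have hk1 : 2 / π ≤ k := by
    rw [div_le_iff₀ pi_pos]; nlinarith [pi_gt_three, (Nat.one_le_cast (α := ℝ)).2 hk]
  calc _ ≤ π ^ 2 / |(j : ℝ) / k - 1| := abs_integral_cos_mul_gFun_div_le hk1 (by linarith)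
    _ ≤ π ^ 2 / δ := by rw [abs_of_pos (by linarith)]; gcongr
end

section
/- Let (f_N) be a sequence of holomorphic functions on the right half-plane S = {z ∈ ℂ : Re z > 0} with |f_N(z)| ≤ 1 for all z ∈ S and all N, and suppose f_N(t) converges pointwise for every t ∈ (0,∞). Then there exists a holomorphic function f on S such that f_N → f uniformly on compact subsets of S. -/
/-!
Vitali–Porter. Near a point `c` around which the `f N` are holomorphic and bounded by `M` on
`ball c r`, write `f N z = ∑_{k<K} (z - c)^k a_k(N) + (z - c)^K g_K(N, z)`, where `g_{k+1}` is the
difference quotient `dslope g_k c` and `a_k(N) = g_k(N, c)`. Schwarz's lemma gives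
`‖g_k(N, ·)‖ ≤ M (2/r)^k`, so on `closedBall c (r/4)` the remainder is at most `M 2^{-K}` for every
`N`, and the `f N` are uniformly Cauchy there once every coefficient sequence `a_k` is Cauchy.
If `f N` converges at points `t j → c` with `t j ≠ c`, the slope formula makes every `g_k(N, t j)`
converge, and the bound on `g_{k+1}` (a Lipschitz bound for `g_k` at `c`, uniform in `N`) passes
this on to `a_k(N) = g_k(N, c)`.
Hence the points with a neighbourhood on which `f N` is uniformly Cauchy form an open set that is
closed in the domain; for the half-plane it contains `1`, a limit of positive reals, so by
connectedness it is everything, and the locally uniform limit is holomorphic.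
-/

open Complex Filter Metric Set Topology

theorem cauchySeq_apply_of_dist_le_mul {ι κ X Y : Type*} [Nonempty ι] [SemilatticeSup ι]
    [PseudoMetricSpace X] [PseudoMetricSpace Y] {g : ι → X → Y} {c : X} {l : Filter κ} [l.NeBot]
    {t : κ → X} {L : ℝ} (hL : ∀ᶠ j in l, ∀ N, dist (g N (t j)) (g N c) ≤ L * dist (t j) c)
    (htc : Tendsto t l (𝓝 c)) (hg : ∀ j, CauchySeq fun N => g N (t j)) :
    CauchySeq fun N => g N c := by
  rw [Metric.cauchySeq_iff]
  intro ε hε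
  have hsmall : Tendsto (fun j => L * dist (t j) c) l (𝓝 0) := by
    simpa using (tendsto_iff_dist_tendsto_zero.1 htc).const_mul L
  obtain ⟨j, hjL, hjε⟩ :=
    (hL.and (hsmall.eventually (gt_mem_nhds (by positivity : 0 < ε / 3)))).exists
  obtain ⟨N₀, hN₀⟩ := Metric.cauchySeq_iff.1 (hg j) (ε / 3) (by positivity)
  refine ⟨N₀, fun m hm n hn => ?_⟩
  calc dist (g m c) (g n c)
      ≤ dist (g m (t j)) (g m c) + dist (g m (t j)) (g n (t j)) + dist (g n (t j)) (g n c) := by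
        linarith [dist_triangle4 (g m c) (g m (t j)) (g n (t j)) (g n c),
          dist_comm (g m c) (g m (t j))]
    _ < ε := by linarith [hjL m, hjL n, hN₀ m hm n hn]

theorem uniformCauchySeqOn_of_dist_le_add {ι α Y : Type*} [PseudoMetricSpace Y] {F : ι → α → Y}
    {l : Filter ι} {s : Set α} {b : ℕ → ι × ι → ℝ} {e : ℕ → ℝ}
    (hdist : ∀ K i j, ∀ x ∈ s, dist (F i x) (F j x) ≤ b K (i, j) + e K)
    (hb : ∀ K, Tendsto (b K) (l ×ˢ l) (𝓝 0)) (he : Tendsto e atTop (𝓝 0)) :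
    UniformCauchySeqOn F l s := by
  intro u hu
  obtain ⟨ε, hε, hεu⟩ := Metric.mem_uniformity_dist.1 hu
  obtain ⟨K, hK⟩ := (he.eventually (gt_mem_nhds (half_pos hε))).exists
  filter_upwards [(hb K).eventually (gt_mem_nhds (half_pos hε))] with p hp x hx
  exact hεu ((hdist K p.1 p.2 x hx).trans_lt (by linarith))

theorem tendstoLocallyUniformlyOn_limUnder_of_uniformCauchySeqOn {α Y : Type*}
    [TopologicalSpace α] [UniformSpace Y] [CompleteSpace Y] [Nonempty Y] {F : ℕ → α → Y}
    {s : Set α}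
    (h : ∀ x ∈ s, ∃ u ∈ 𝓝[s] x, UniformCauchySeqOn F atTop u) :
    TendstoLocallyUniformlyOn F (fun x => limUnder atTop fun N => F N x) atTop s :=
  tendstoLocallyUniformlyOn_of_forall_exists_nhds fun x hx => by
    obtain ⟨u, hu, hF⟩ := h x hx
    exact ⟨u, hu, hF.tendstoUniformlyOn_of_tendsto fun y hy => (hF.cauchySeq hy).tendsto_limUnder⟩

section IteratedDslope

variable {𝕜 E : Type*} [NontriviallyNormedField 𝕜] [NormedAddCommGroup E] [NormedSpace 𝕜 E]

noncomputable def iteratedDslope (f : 𝕜 → E) (c : 𝕜) : ℕ → 𝕜 → E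
  | 0 => f
  | k + 1 => dslope (iteratedDslope f c k) c

@[simp]
theorem iteratedDslope_zero (f : 𝕜 → E) (c : 𝕜) : iteratedDslope f c 0 = f := rfl

@[simp]
theorem iteratedDslope_succ (f : 𝕜 → E) (c : 𝕜) (k : ℕ) :
    iteratedDslope f c (k + 1) = dslope (iteratedDslope f c k) c := rfl

theorem sum_add_iteratedDslope_eq (f : 𝕜 → E) (c z : 𝕜) (K : ℕ) :
    ∑ k ∈ Finset.range K, (z - c) ^ k • iteratedDslope f c k c
      + (z - c) ^ K • iteratedDslope f c K z = f z := by
  induction K with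
  | zero => simp
  | succ K ih =>
    rw [Finset.sum_range_succ, add_assoc, pow_succ, mul_smul, iteratedDslope_succ,
      sub_smul_dslope, ← smul_add, add_sub_cancel, ih]

end IteratedDslope

section ComplexIteratedDslope

variable {E : Type*} [NormedAddCommGroup E] [NormedSpace ℂ E] [CompleteSpace E]

theorem DifferentiableOn.iteratedDslope {f : ℂ → E} {s : Set ℂ} {c : ℂ}
    (hf : DifferentiableOn ℂ f s) (hs : s ∈ 𝓝 c) (k : ℕ) :
    DifferentiableOn ℂ (iteratedDslope f c k) s := by
  induction k with
  | zero => exact hf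
  | succ k ih => exact (differentiableOn_dslope hs).2 ih

variable {f g : ℂ → E} {c z : ℂ} {r M : ℝ}

theorem norm_iteratedDslope_le (hf : DifferentiableOn ℂ f (ball c r))
    (hM : ∀ z ∈ ball c r, ‖f z‖ ≤ M) (k : ℕ) (hz : z ∈ ball c r) :
    ‖iteratedDslope f c k z‖ ≤ M * (2 / r) ^ k := by
  induction k generalizing z with
  | zero => simpa using hM z hz
  | succ k ih =>
    have hr : 0 < r := pos_of_mem_ball hz
    have hmaps : MapsTo (iteratedDslope f c k) (ball c r)
        (closedBall (iteratedDslope f c k c) (2 * (M * (2 / r) ^ k))) := fun w hw => by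
      rw [mem_closedBall, dist_eq_norm]
      linarith [norm_sub_le (iteratedDslope f c k w) (iteratedDslope f c k c), ih hw,
        ih (mem_ball_self hr)]
    calc ‖iteratedDslope f c (k + 1) z‖ ≤ 2 * (M * (2 / r) ^ k) / r :=
          norm_dslope_le_div_of_mapsTo_ball (hf.iteratedDslope (ball_mem_nhds c hr) k) hmaps hz
      _ = M * (2 / r) ^ (k + 1) := by ring

theorem norm_sub_sum_iteratedDslope_le (hf : DifferentiableOn ℂ f (ball c r))
    (hM : ∀ z ∈ ball c r, ‖f z‖ ≤ M) (hr : 0 < r) (K : ℕ) (hz : z ∈ closedBall c (r / 4)) :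
    ‖f z - ∑ k ∈ Finset.range K, (z - c) ^ k • iteratedDslope f c k c‖ ≤ M * (1 / 2) ^ K := by
  rw [← sum_add_iteratedDslope_eq f c z K, add_sub_cancel_left, norm_smul, norm_pow]
  have hzc : ‖z - c‖ ≤ r / 4 := by rwa [mem_closedBall, dist_eq_norm] at hz
  have hzb : z ∈ ball c r := closedBall_subset_ball (by linarith) hz
  calc ‖z - c‖ ^ K * ‖iteratedDslope f c K z‖ ≤ (r / 4) ^ K * (M * (2 / r) ^ K) :=
        mul_le_mul (pow_le_pow_left₀ (norm_nonneg _) hzc K) (norm_iteratedDslope_le hf hM K hzb)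
          (norm_nonneg _) (by positivity)
    _ = M * (1 / 2) ^ K := by
        rw [mul_left_comm, ← mul_pow]
        field_simp
        ring

theorem norm_sub_le_sum_norm_sub_iteratedDslope_add
    (hf : DifferentiableOn ℂ f (ball c r)) (hfM : ∀ z ∈ ball c r, ‖f z‖ ≤ M)
    (hg : DifferentiableOn ℂ g (ball c r)) (hgM : ∀ z ∈ ball c r, ‖g z‖ ≤ M)
    (hr : 0 < r) (K : ℕ) (hz : z ∈ closedBall c (r / 4)) :
    ‖f z - g z‖ ≤ ∑ k ∈ Finset.range K,
        ‖iteratedDslope f c k c - iteratedDslope g c k c‖ * (r / 4) ^ k + 2 * M * (1 / 2) ^ K := by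
  set P := fun h : ℂ → E => ∑ k ∈ Finset.range K, (z - c) ^ k • iteratedDslope h c k c
  have hzc : ‖z - c‖ ≤ r / 4 := by rwa [mem_closedBall, dist_eq_norm] at hz
  have hPfg : ‖P f - P g‖ ≤ ∑ k ∈ Finset.range K,
      ‖iteratedDslope f c k c - iteratedDslope g c k c‖ * (r / 4) ^ k := by
    simp only [P, ← Finset.sum_sub_distrib, ← smul_sub]
    refine (norm_sum_le _ _).trans (Finset.sum_le_sum fun k _ => ?_)
    rw [norm_smul, norm_pow, mul_comm]
    gcongr
  calc ‖f z - g z‖ = ‖(P f - P g) + (f z - P f) - (g z - P g)‖ := by congr 1; abel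
    _ ≤ ‖P f - P g‖ + ‖f z - P f‖ + ‖g z - P g‖ :=
        (norm_sub_le _ _).trans (by gcongr; exact norm_add_le _ _)
    _ ≤ _ := by
        linarith [norm_sub_sum_iteratedDslope_le hf hfM hr K hz,
          norm_sub_sum_iteratedDslope_le hg hgM hr K hz]

end ComplexIteratedDslope

section Vitali

variable {E : Type*} [NormedAddCommGroup E] [NormedSpace ℂ E] [CompleteSpace E]
  {f : ℕ → ℂ → E} {s : Set ℂ} {c : ℂ} {r M : ℝ} {t : ℕ → ℂ}

theorem cauchySeq_iteratedDslope_apply (hr : 0 < r)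
    (holo : ∀ N, DifferentiableOn ℂ (f N) (ball c r)) (bdd : ∀ N, ∀ z ∈ ball c r, ‖f N z‖ ≤ M)
    (htne : ∀ j, t j ≠ c) (htc : Tendsto t atTop (𝓝 c))
    (hconv : ∀ j, CauchySeq fun N => f N (t j)) (k : ℕ) :
    CauchySeq fun N => iteratedDslope (f N) c k c := by
  have center : ∀ k, (∀ j, CauchySeq fun N => iteratedDslope (f N) c k (t j)) →
      CauchySeq fun N => iteratedDslope (f N) c k c := fun k hk => by
    refine cauchySeq_apply_of_dist_le_mul (L := M * (2 / r) ^ (k + 1)) ?_ htc hk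
    filter_upwards [htc.eventually (ball_mem_nhds c hr)] with j hj N
    rw [dist_eq_norm, dist_eq_norm, ← sub_smul_dslope, norm_smul, mul_comm]
    exact mul_le_mul_of_nonneg_right (norm_iteratedDslope_le (holo N) (bdd N) (k + 1) hj)
      (norm_nonneg _)
  suffices ∀ k, ∀ j, CauchySeq fun N => iteratedDslope (f N) c k (t j) from center k (this k)
  intro k
  induction k with
  | zero => exact hconv
  | succ k ih =>
    intro j
    simp only [iteratedDslope_succ, dslope_of_ne _ (htne j), slope_def_module]
    exact (uniformContinuous_id.const_smul _).comp_cauchySeq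
      (uniformContinuous_sub.comp_cauchySeq ((ih j).prodMk (center k ih)))

theorem uniformCauchySeqOn_closedBall_of_cauchySeq_apply (hr : 0 < r)
    (holo : ∀ N, DifferentiableOn ℂ (f N) (ball c r)) (bdd : ∀ N, ∀ z ∈ ball c r, ‖f N z‖ ≤ M)
    (htne : ∀ j, t j ≠ c) (htc : Tendsto t atTop (𝓝 c))
    (hconv : ∀ j, CauchySeq fun N => f N (t j)) :
    UniformCauchySeqOn f atTop (closedBall c (r / 4)) := by
  have hcoef := cauchySeq_iteratedDslope_apply hr holo bdd htne htc hconv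
  refine uniformCauchySeqOn_of_dist_le_add
    (b := fun K p => ∑ k ∈ Finset.range K,
      ‖iteratedDslope (f p.1) c k c - iteratedDslope (f p.2) c k c‖ * (r / 4) ^ k)
    (e := fun K => 2 * M * (1 / 2) ^ K) (fun K m n z hz => ?_) (fun K => ?_) ?_
  · rw [dist_eq_norm]
    exact norm_sub_le_sum_norm_sub_iteratedDslope_add (holo m) (bdd m) (holo n) (bdd n) hr K hz
  · rw [prod_atTop_atTop_eq]
    simpa [dist_eq_norm] using tendsto_finsetSum (Finset.range K) fun k _ =>
      (cauchySeq_iff_tendsto_dist_atTop_0.1 (hcoef k)).mul_const ((r / 4) ^ k)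
  · simpa using (tendsto_pow_atTop_nhds_zero_of_lt_one (by norm_num : (0 : ℝ) ≤ 1 / 2)
      (by norm_num)).const_mul (2 * M)

theorem exists_mem_nhds_uniformCauchySeqOn_of_cauchySeq_apply (hs : IsOpen s)
    (holo : ∀ N, DifferentiableOn ℂ (f N) s) (bdd : ∀ N, ∀ z ∈ s, ‖f N z‖ ≤ M)
    (hc : c ∈ s) (htne : ∀ j, t j ≠ c) (htc : Tendsto t atTop (𝓝 c))
    (hconv : ∀ j, CauchySeq fun N => f N (t j)) :
    ∃ u ∈ 𝓝 c, UniformCauchySeqOn f atTop u := by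
  obtain ⟨r, hr, hrs⟩ := Metric.isOpen_iff.1 hs c hc
  exact ⟨closedBall c (r / 4), closedBall_mem_nhds c (by positivity),
    uniformCauchySeqOn_closedBall_of_cauchySeq_apply hr (fun N => (holo N).mono hrs)
      (fun N z hz => bdd N z (hrs hz)) htne htc hconv⟩

theorem tendstoLocallyUniformlyOn_limUnder_of_cauchySeq_apply (hs : IsOpen s)
    (hs' : IsPreconnected s) (holo : ∀ N, DifferentiableOn ℂ (f N) s)
    (bdd : ∀ N, ∀ z ∈ s, ‖f N z‖ ≤ M)
    (hc : c ∈ s) (htne : ∀ j, t j ≠ c) (htc : Tendsto t atTop (𝓝 c))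
    (hconv : ∀ j, CauchySeq fun N => f N (t j)) :
    TendstoLocallyUniformlyOn f (fun z => limUnder atTop fun N => f N z) atTop s := by
  set U := {z | ∃ u ∈ 𝓝 z, UniformCauchySeqOn f atTop u}
  have hU : IsOpen U := isOpen_iff_mem_nhds.2 fun z ⟨u, hu, hf⟩ =>
    (eventually_mem_nhds_iff.2 hu).mono fun w hw => ⟨u, hw, hf⟩
  have hclosure : closure U ∩ s ⊆ U := by
    rintro z ⟨hzU, hzs⟩
    by_contra hz
    obtain ⟨x, hxU, hxz⟩ := mem_closure_iff_seq_limit.1 hzU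
    refine hz (exists_mem_nhds_uniformCauchySeqOn_of_cauchySeq_apply hs holo bdd hzs
      (fun j hj => hz (hj ▸ hxU j)) hxz fun j => ?_)
    obtain ⟨u, hu, hf⟩ := hxU j
    exact hf.cauchySeq (mem_of_mem_nhds hu)
  have hsU : s ⊆ U := hs'.subset_of_closure_inter_subset hU
    ⟨c, hc, exists_mem_nhds_uniformCauchySeqOn_of_cauchySeq_apply hs holo bdd hc htne htc hconv⟩
    hclosure
  refine tendstoLocallyUniformlyOn_limUnder_of_uniformCauchySeqOn fun z hz => ?_
  obtain ⟨u, hu, hf⟩ := hsU hz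
  exact ⟨u, mem_nhdsWithin_of_mem_nhds hu, hf⟩

end Vitali

/-- Montel-type statement: if `(f_N)` are holomorphic on the right half-plane `S`,
uniformly bounded by `1`, and converge pointwise on `(0,∞)`, then they converge
uniformly on compact subsets of `S` to some holomorphic function `f`. -/
theorem stmt_9 (f : ℕ → ℂ → ℂ)
    (holo : ∀ N, DifferentiableOn ℂ (f N) {z : ℂ | 0 < z.re})
    (bdd : ∀ N, ∀ z ∈ {z : ℂ | 0 < z.re}, ‖f N z‖ ≤ 1)
    (ptwise : ∀ t : ℝ, 0 < t → ∃ l : ℂ, Tendsto (fun N => f N (t : ℂ)) atTop (nhds l)) :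
    ∃ F : ℂ → ℂ, DifferentiableOn ℂ F {z : ℂ | 0 < z.re} ∧
      ∀ K : Set ℂ, K ⊆ {z : ℂ | 0 < z.re} → IsCompact K →
        TendstoUniformlyOn (fun N z => f N z) F atTop K := by
  have hS : IsOpen {z : ℂ | 0 < z.re} := isOpen_lt continuous_const continuous_re
  set t : ℕ → ℂ := fun j => ((1 + 1 / ((j : ℝ) + 1) : ℝ) : ℂ)
  have htne : ∀ j, t j ≠ 1 := fun j => by
    simp only [t, ne_eq, ofReal_eq_one, add_eq_left]
    positivity
  have htc : Tendsto t atTop (𝓝 1) := by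
    rw [← ofReal_one, tendsto_ofReal_iff]
    simpa using (tendsto_one_div_add_atTop_nhds_zero_nat (𝕜 := ℝ)).const_add 1
  have hconv : ∀ j, CauchySeq fun N => f N (t j) := fun j =>
    (ptwise _ (by positivity)).choose_spec.cauchySeq
  have hf := tendstoLocallyUniformlyOn_limUnder_of_cauchySeq_apply hS
    (convex_halfSpace_re_gt 0).isPreconnected holo bdd (by simp) htne htc hconv
  exact ⟨_, hf.differentiableOn (Eventually.of_forall holo) hS,
    (tendstoLocallyUniformlyOn_iff_forall_isCompact hS).1 hf⟩
end
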